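/- arXiv:1905.04179 — 2 statements merged into one kernel-verified Lean document; each statement's English description precedes it below -/
import Mathlib

section
/- There exists an absolute constant C > 0 such that for every prime p and every E ⊆ F_p², |Q(E)| ≤ C·|Δ(E)|·( □(E) + |E|² ). -/
/-!
Sort the ordered pairs `(a, b)` of `E` with `‖a - b‖ ≠ 0` by their bisector and, within each
bisector, by their length, which lies in `Δ(E)`. Cauchy–Schwarz on each bisector class bounds
`Q(E)` by `|Δ(E)|` times the number of pairs of segments `ab`, `cd` with the same bisector and
the same length. For odd `p` the normals `b - a` and `d - c` of such segments are parallel and of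
equal nonzero norm, so `d - c = ±(b - a)`; then either `cd` is `ab` or `ba`, or the midpoint of
`ab` lying on `l_{cd}` makes `a b d c` (or `a b c d`) a non-degenerate rectangle. For `p = 2`
there are at most four points and the bound is trivial.
-/

open Finset

namespace FpDist

/-- Points of `𝔽_p²`. -/
abbrev Pt (p : ℕ) := ZMod p × ZMod p

/-- The "distance" `‖x - y‖ = (x₁-y₁)² + (x₂-y₂)²` in `𝔽_p²`. -/
def dist2 {p : ℕ} (x y : Pt p) : ZMod p := (x.1 - y.1)^2 + (x.2 - y.2)^2

/-- `‖x‖ = x₁² + x₂²`. -/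
def norm2 {p : ℕ} (x : Pt p) : ZMod p := x.1^2 + x.2^2

/-- The distance set `Δ(E) = {‖x - y‖ : x, y ∈ E}`. -/
def distSet {p : ℕ} (E : Finset (Pt p)) : Finset (ZMod p) :=
  (E ×ˢ E).image fun q => dist2 q.1 q.2

/-- `(a, b, c)` is a corner if `(b - a) · (c - a) = 0`. -/
def IsCorner {p : ℕ} (a b c : Pt p) : Prop :=
  (b.1 - a.1) * (c.1 - a.1) + (b.2 - a.2) * (c.2 - a.2) = 0

/-- `(a, b, c, d)` forms a rectangle if `(a,b,d), (b,a,c), (c,b,d), (d,a,c)` are corners. -/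
def IsRectangle {p : ℕ} (a b c d : Pt p) : Prop :=
  IsCorner a b d ∧ IsCorner b a c ∧ IsCorner c b d ∧ IsCorner d a c

/-- `□(E)`: the number of non-degenerate rectangles `(a,b,c,d) ∈ E⁴`
(non-degenerate: not all four vertices lie on one line). -/
noncomputable def rectCount (p : ℕ) [Fact p.Prime] (E : Finset (Pt p)) : ℕ :=
  Set.ncard {q : Pt p × Pt p × Pt p × Pt p |
    q.1 ∈ E ∧ q.2.1 ∈ E ∧ q.2.2.1 ∈ E ∧ q.2.2.2 ∈ E ∧
    IsRectangle q.1 q.2.1 q.2.2.1 q.2.2.2 ∧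
    ¬ Collinear (ZMod p) ({q.1, q.2.1, q.2.2.1, q.2.2.2} : Set (Pt p))}

/-- `T(E)`: the number of isosceles triangles, i.e. triples `(a,b,c) ∈ E³`
with `‖a - c‖ = ‖b - c‖ ≠ 0`. -/
def triCount {p : ℕ} (E : Finset (Pt p)) : ℕ :=
  ((E ×ˢ E ×ˢ E).filter fun q =>
    dist2 q.1 q.2.2 = dist2 q.2.1 q.2.2 ∧ dist2 q.1 q.2.2 ≠ 0).card

/-- The perpendicular bisector line `l_{ab} = {x : ‖x - a‖ = ‖x - b‖}`. -/
def bisector {p : ℕ} (a b : Pt p) : Set (Pt p) := {x | dist2 x a = dist2 x b}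

/-- `Q(E)`: the number of quadruples `(a,b,c,d) ∈ E⁴` with `‖a-b‖ ≠ 0`, `‖c-d‖ ≠ 0`
and `l_{ab} = l_{cd}`. -/
noncomputable def Qcount {p : ℕ} (E : Finset (Pt p)) : ℕ :=
  Set.ncard {q : Pt p × Pt p × Pt p × Pt p |
    q.1 ∈ E ∧ q.2.1 ∈ E ∧ q.2.2.1 ∈ E ∧ q.2.2.2 ∈ E ∧
    dist2 q.1 q.2.1 ≠ 0 ∧ dist2 q.2.2.1 q.2.2.2 ≠ 0 ∧
    bisector q.1 q.2.1 = bisector q.2.2.1 q.2.2.2}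

section Collisions

variable {α β γ : Type*} [DecidableEq β] [DecidableEq γ]

lemma card_filter_eq_eq_sum_sq (S : Finset α) (g : α → γ) {D : Finset γ}
    (hD : ∀ s ∈ S, g s ∈ D) :
    #{st ∈ S ×ˢ S | g st.1 = g st.2} = ∑ y ∈ D, #{s ∈ S | g s = y} ^ 2 := by
  rw [card_eq_sum_card_fiberwise (f := fun st => g st.1) (t := D)
    fun st hst => hD _ (mem_product.mp (mem_filter.mp hst).1).1]
  refine sum_congr rfl fun y _ => ?_
  rw [sq, ← card_product]
  congr 1
  ext ⟨s, t⟩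
  simp only [mem_filter, mem_product]
  constructor
  · rintro ⟨⟨⟨hs, ht⟩, hst⟩, rfl⟩
    exact ⟨⟨hs, rfl⟩, ht, hst.symm⟩
  · rintro ⟨⟨hs, rfl⟩, ht, hst⟩
    exact ⟨⟨⟨hs, ht⟩, hst.symm⟩, rfl⟩

lemma sq_card_le_card_mul_card_filter_eq (S : Finset α) (g : α → γ) {D : Finset γ}
    (hD : ∀ s ∈ S, g s ∈ D) :
    #S ^ 2 ≤ #D * #{st ∈ S ×ˢ S | g st.1 = g st.2} := by
  rw [card_filter_eq_eq_sum_sq S g hD, card_eq_sum_card_fiberwise hD]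
  exact sq_sum_le_card_mul_sum_sq

lemma card_filter_eq_le_card_mul (S : Finset α) (f : α → β) (g : α → γ) {D : Finset γ}
    (hD : ∀ s ∈ S, g s ∈ D) :
    #{st ∈ S ×ˢ S | f st.1 = f st.2}
      ≤ #D * #{st ∈ S ×ˢ S | f st.1 = f st.2 ∧ g st.1 = g st.2} := by
  have hf : ∀ s ∈ S, f s ∈ S.image f := fun s hs => mem_image_of_mem f hs
  have hfibre : #{st ∈ S ×ˢ S | f st.1 = f st.2 ∧ g st.1 = g st.2}
      = ∑ k ∈ S.image f, #{st ∈ {s ∈ S | f s = k} ×ˢ {s ∈ S | f s = k} | g st.1 = g st.2} := by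
    rw [card_eq_sum_card_fiberwise (f := fun st => f st.1) (t := S.image f)
      fun st hst => hf _ (mem_product.mp (mem_filter.mp hst).1).1]
    refine sum_congr rfl fun k _ => congrArg card ?_
    ext ⟨s, t⟩
    simp only [mem_filter, mem_product]
    constructor
    · rintro ⟨⟨⟨hs, ht⟩, hst, hg⟩, rfl⟩
      exact ⟨⟨⟨hs, rfl⟩, ht, hst.symm⟩, hg⟩
    · rintro ⟨⟨⟨hs, rfl⟩, ht, hst⟩, hg⟩
      exact ⟨⟨⟨hs, ht⟩, hst.symm, hg⟩, rfl⟩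
  rw [card_filter_eq_eq_sum_sq S f hf, hfibre, mul_sum]
  exact sum_le_sum fun k _ =>
    sq_card_le_card_mul_card_filter_eq _ g fun s hs => hD s (mem_filter.mp hs).1

end Collisions

lemma eq_or_eq_neg_of_cross_eq {K : Type*} [Field K] {u v : K × K}
    (hu : u.1 ^ 2 + u.2 ^ 2 ≠ 0) (huv : u.1 ^ 2 + u.2 ^ 2 = v.1 ^ 2 + v.2 ^ 2)
    (hx : u.1 * v.2 = u.2 * v.1) : v = u ∨ v = -u := by
  have hdot : (u.1 * v.1 + u.2 * v.2) ^ 2 = (u.1 ^ 2 + u.2 ^ 2) ^ 2 := by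
    linear_combination -(u.1 ^ 2 + u.2 ^ 2) * huv - (u.1 * v.2 - u.2 * v.1) * hx
  rcases sq_eq_sq_iff_eq_or_eq_neg.mp hdot with h | h
  · left
    refine Prod.ext (mul_left_cancel₀ hu ?_) (mul_left_cancel₀ hu ?_)
    · linear_combination u.1 * h - u.2 * hx
    · linear_combination u.2 * h + u.1 * hx
  · right
    refine Prod.ext (mul_left_cancel₀ hu ?_) (mul_left_cancel₀ hu ?_)
    · rw [Prod.fst_neg]; linear_combination u.1 * h - u.2 * hx
    · rw [Prod.snd_neg]; linear_combination u.2 * h + u.1 * hx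

variable {p : ℕ}

lemma mem_bisector_iff {a b x : Pt p} :
    x ∈ bisector a b ↔ 2 * (x.1 * (b.1 - a.1) + x.2 * (b.2 - a.2)) = norm2 b - norm2 a := by
  simp only [bisector, Set.mem_ofPred_eq, dist2, norm2]
  constructor <;> intro h <;> linear_combination h

lemma bisector_comm (a b : Pt p) : bisector a b = bisector b a := by
  ext x
  exact eq_comm

lemma add_perp_mem_bisector {a b x : Pt p} (hx : x ∈ bisector a b) :
    (x.1 - (b.2 - a.2), x.2 + (b.1 - a.1)) ∈ bisector a b := by
  rw [mem_bisector_iff] at hx ⊢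
  linear_combination hx

def nondegPairs (E : Finset (Pt p)) : Finset (Pt p × Pt p) :=
  {s ∈ E ×ˢ E | dist2 s.1 s.2 ≠ 0}

open Classical in
noncomputable def bisectorLengthCollisions (E : Finset (Pt p)) :
    Finset ((Pt p × Pt p) × (Pt p × Pt p)) :=
  {st ∈ nondegPairs E ×ˢ nondegPairs E |
    bisector st.1.1 st.1.2 = bisector st.2.1 st.2.2 ∧ dist2 st.1.1 st.1.2 = dist2 st.2.1 st.2.2}

lemma card_nondegPairs_le (E : Finset (Pt p)) : #(nondegPairs E) ≤ #E ^ 2 := by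
  rw [sq, ← card_product]
  exact card_filter_le _ _

lemma card_bisectorLengthCollisions_le_sq (E : Finset (Pt p)) :
    #(bisectorLengthCollisions E) ≤ #(nondegPairs E) ^ 2 := by
  rw [sq, ← card_product]
  exact card_filter_le _ _

open Classical in
lemma Qcount_eq_card (E : Finset (Pt p)) :
    Qcount E = #{st ∈ nondegPairs E ×ˢ nondegPairs E |
      bisector st.1.1 st.1.2 = bisector st.2.1 st.2.2} := by
  rw [Qcount, ← Set.ncard_image_of_injective _ (Equiv.prodAssoc _ _ _).symm.injective,
    ← Set.ncard_coe_finset, Equiv.image_symm_eq_preimage]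
  refine congrArg Set.ncard ?_
  ext ⟨⟨a, b⟩, c, d⟩
  simp only [Set.mem_preimage, Equiv.prodAssoc_apply, Set.mem_ofPred_eq, mem_coe, mem_filter,
    mem_product, nondegPairs]
  tauto

lemma Qcount_le_card_distSet_mul (E : Finset (Pt p)) :
    Qcount E ≤ #(distSet E) * #(bisectorLengthCollisions E) := by
  classical
  rw [Qcount_eq_card]
  exact card_filter_eq_le_card_mul _ (fun s : Pt p × Pt p => bisector s.1 s.2)
    (fun s => dist2 s.1 s.2)
    fun s hs => mem_image_of_mem _ (mem_filter.mp hs).1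

section Prime

variable [Fact p.Prime]

lemma two_ne_zero_of_ne_two (hp : p ≠ 2) : (2 : ZMod p) ≠ 0 :=
  Ring.two_ne_zero (by rwa [ZMod.ringChar_zmod_n])

lemma midpoint_mem_bisector (h2 : (2 : ZMod p) ≠ 0) (a b : Pt p) :
    (2⁻¹ * (a.1 + b.1), 2⁻¹ * (a.2 + b.2)) ∈ bisector a b := by
  rw [mem_bisector_iff, norm2, norm2]
  linear_combination ((a.1 + b.1) * (b.1 - a.1) + (a.2 + b.2) * (b.2 - a.2)) * mul_inv_cancel₀ h2

lemma cross_eq_of_bisector_eq (h2 : (2 : ZMod p) ≠ 0) {a b c d : Pt p}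
    (h : bisector a b = bisector c d) :
    (b.1 - a.1) * (d.2 - c.2) = (b.2 - a.2) * (d.1 - c.1) := by
  have hm := midpoint_mem_bisector h2 a b
  have hm' := h ▸ add_perp_mem_bisector hm
  rw [h, mem_bisector_iff] at hm
  rw [mem_bisector_iff] at hm'
  exact mul_left_cancel₀ h2 (by linear_combination hm' - hm)

lemma add_dot_sub_eq_of_bisector_eq (h2 : (2 : ZMod p) ≠ 0) {a b c d : Pt p}
    (h : bisector a b = bisector c d) :
    (a.1 + b.1) * (d.1 - c.1) + (a.2 + b.2) * (d.2 - c.2) = norm2 d - norm2 c := by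
  have hm := h ▸ midpoint_mem_bisector h2 a b
  rw [mem_bisector_iff] at hm
  linear_combination hm - ((a.1 + b.1) * (d.1 - c.1) + (a.2 + b.2) * (d.2 - c.2)) *
    mul_inv_cancel₀ h2

lemma not_collinear_of_isCorner {a b c : Pt p} (hab : dist2 a b ≠ 0) (hca : c ≠ a)
    (h : IsCorner a b c) : ¬ Collinear (ZMod p) ({a, b, c} : Set (Pt p)) := by
  intro hcol
  obtain ⟨v, hv⟩ := (collinear_iff_of_mem (by simp : a ∈ ({a, b, c} : Set (Pt p)))).mp hcol
  obtain ⟨r, rfl⟩ := hv b (by simp)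
  obtain ⟨s, rfl⟩ := hv c (by simp)
  simp only [IsCorner, dist2, vadd_eq_add, Prod.fst_add, Prod.snd_add, Prod.smul_fst,
    Prod.smul_snd, smul_eq_mul, add_sub_cancel_right] at h hab
  have hs : s * ((a.1 - (r * v.1 + a.1)) ^ 2 + (a.2 - (r * v.2 + a.2)) ^ 2) = 0 := by
    linear_combination r * h
  rcases mul_eq_zero.mp hs with hs | hs
  · exact hca (by simp [hs])
  · exact hab hs

def IsNondegRect (a b c d : Pt p) : Prop :=
  IsRectangle a b c d ∧ ¬ Collinear (ZMod p) ({a, b, c, d} : Set (Pt p))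

lemma isNondegRect_of_sub_eq (h2 : (2 : ZMod p) ≠ 0) {a b c d : Pt p} (hab : dist2 a b ≠ 0)
    (hca : c ≠ a) (hbis : bisector a b = bisector c d) (hdc : d - c = b - a) :
    IsNondegRect a b d c := by
  have hm := add_dot_sub_eq_of_bisector_eq h2 hbis
  obtain rfl : d = c + (b - a) := eq_add_of_sub_eq' hdc
  simp only [norm2, Prod.fst_add, Prod.snd_add, Prod.fst_sub, Prod.snd_sub] at hm
  have hcorner : IsCorner a b c := mul_left_cancel₀ h2 <| by linear_combination -hm
  have hrect : IsRectangle a b (c + (b - a)) c := by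
    simp only [IsRectangle, IsCorner, Prod.fst_add, Prod.snd_add, Prod.fst_sub,
      Prod.snd_sub] at hcorner ⊢
    exact ⟨hcorner, by linear_combination -hcorner, by linear_combination hcorner,
      by linear_combination -hcorner⟩
  refine ⟨hrect, fun hcol => not_collinear_of_isCorner hab hca hcorner (hcol.subset ?_)⟩
  intro x
  simp only [Set.mem_insert_iff, Set.mem_singleton_iff]
  tauto

lemma eq_or_isNondegRect_of_bisector_eq (hp : p ≠ 2) {a b c d : Pt p} (hab : dist2 a b ≠ 0)
    (hbis : bisector a b = bisector c d) (hdist : dist2 a b = dist2 c d) :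
    (c, d) = (a, b) ∨ (c, d) = (b, a) ∨ IsNondegRect a b d c ∨ IsNondegRect a b c d := by
  have h2 := two_ne_zero_of_ne_two hp
  have hu : (b - a).1 ^ 2 + (b - a).2 ^ 2 ≠ 0 := by
    simpa [dist2, sub_sq_comm a.1, sub_sq_comm a.2] using hab
  have huv : (b - a).1 ^ 2 + (b - a).2 ^ 2 = (d - c).1 ^ 2 + (d - c).2 ^ 2 := by
    simpa [dist2, sub_sq_comm a.1, sub_sq_comm a.2, sub_sq_comm c.1, sub_sq_comm c.2] using hdist
  rcases eq_or_eq_neg_of_cross_eq hu huv (cross_eq_of_bisector_eq h2 hbis) with hdc | hdc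
  · rcases eq_or_ne c a with rfl | hca
    · obtain rfl := sub_left_inj.mp hdc
      left; rfl
    · exact Or.inr (Or.inr (Or.inl (isNondegRect_of_sub_eq h2 hab hca hbis hdc)))
  · have hcd : c - d = b - a := by rw [← neg_sub, hdc, neg_neg]
    rcases eq_or_ne d a with rfl | hda
    · obtain rfl := sub_left_inj.mp hcd
      right; left; rfl
    · exact Or.inr (Or.inr (Or.inr
        (isNondegRect_of_sub_eq h2 hab hda (hbis.trans (bisector_comm c d)) hcd)))

open Classical in
lemma rectCount_eq_card (E : Finset (Pt p)) :
    rectCount p E = #{q ∈ E ×ˢ E ×ˢ E ×ˢ E | IsNondegRect q.1 q.2.1 q.2.2.1 q.2.2.2} := by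
  rw [rectCount, ← Set.ncard_coe_finset]
  refine congrArg Set.ncard ?_
  ext ⟨a, b, c, d⟩
  rw [mem_coe, mem_filter]
  simp [IsNondegRect, and_assoc]

lemma card_bisectorLengthCollisions_le (hp : p ≠ 2) (E : Finset (Pt p)) :
    #(bisectorLengthCollisions E) ≤ 2 * #(nondegPairs E) + 2 * rectCount p E := by
  classical
  set S := nondegPairs E
  set T := {q ∈ E ×ˢ E ×ˢ E ×ˢ E | IsNondegRect q.1 q.2.1 q.2.2.1 q.2.2.2}
  have hsub : bisectorLengthCollisions E ⊆ S.diag ∪ S.image (fun s => (s, s.swap)) ∪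
      T.image (fun q => ((q.1, q.2.1), (q.2.2.2, q.2.2.1))) ∪
      T.image (fun q => ((q.1, q.2.1), (q.2.2.1, q.2.2.2))) := by
    rintro ⟨⟨a, b⟩, c, d⟩ h
    obtain ⟨hst, hbis, hdist⟩ := mem_filter.mp h
    obtain ⟨hs, ht⟩ := mem_product.mp hst
    obtain ⟨habE, hab⟩ := mem_filter.mp hs
    obtain ⟨ha, hb⟩ := mem_product.mp habE
    obtain ⟨hc, hd⟩ := mem_product.mp (mem_filter.mp ht).1
    rcases eq_or_isNondegRect_of_bisector_eq hp hab hbis hdist with h | h | h | h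
    · rw [h]
      exact mem_union_left _ (mem_union_left _ (mem_union_left _ (mem_diag.mpr ⟨hs, rfl⟩)))
    · rw [h]
      exact mem_union_left _ (mem_union_left _ (mem_union_right _ (mem_image_of_mem _ hs)))
    · refine mem_union_left _ (mem_union_right _ (mem_image.mpr ⟨(a, b, d, c), ?_, rfl⟩))
      exact mem_filter.mpr ⟨by simp [ha, hb, hc, hd], h⟩
    · refine mem_union_right _ (mem_image.mpr ⟨(a, b, c, d), ?_, rfl⟩)
      exact mem_filter.mpr ⟨by simp [ha, hb, hc, hd], h⟩
  have hT : #T = rectCount p E := (rectCount_eq_card E).symm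
  grw [card_le_card hsub, card_union_le, card_union_le, card_union_le, diag_card, card_image_le,
    card_image_le, card_image_le]
  omega

end Prime

/-- There is an absolute constant `C > 0` such that for every prime `p` and every
`E ⊆ 𝔽_p²`, `Q(E) ≤ C·|Δ(E)|·(□(E) + |E|²)`. -/
theorem Q_le_distSet_mul_rect :
    ∃ C : ℝ, 0 < C ∧
      ∀ (p : ℕ) [Fact p.Prime], ∀ E : Finset (Pt p),
        (Qcount E : ℝ) ≤ C * ((distSet E).card : ℝ) *
          ((rectCount p E : ℝ) + (E.card : ℝ) ^ 2) := by
  refine ⟨16, by norm_num, fun p _ E => ?_⟩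
  have hS := card_nondegPairs_le E
  have hR : #(bisectorLengthCollisions E) ≤ 16 * (rectCount p E + #E ^ 2) := by
    rcases eq_or_ne p 2 with rfl | hp
    · have hE : #E ≤ 4 := card_le_univ E
      calc #(bisectorLengthCollisions E) ≤ #(nondegPairs E) ^ 2 :=
            card_bisectorLengthCollisions_le_sq E
        _ ≤ (#E ^ 2) ^ 2 := by gcongr
        _ ≤ 16 * #E ^ 2 := by rw [sq (#E ^ 2)]; gcongr; exact Nat.pow_le_pow_left hE 2
        _ ≤ 16 * (rectCount 2 E + #E ^ 2) := by gcongr; omega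
    · have := card_bisectorLengthCollisions_le hp E
      omega
  calc (Qcount E : ℝ) ≤ #(distSet E) * #(bisectorLengthCollisions E) := by
        exact_mod_cast Qcount_le_card_distSet_mul E
    _ ≤ #(distSet E) * (16 * (rectCount p E + #E ^ 2) : ℕ) := by gcongr
    _ = 16 * #(distSet E) * (rectCount p E + #E ^ 2) := by push_cast; ring

end FpDist
end

section
/- Let p be a prime, E ⊆ F_p², and a, b ∈ F_p² with ||a−b|| ≠ 0. Then the set Λ := {λ ∈ F_p, λ ≠ 0 : there exist c,d ∈ E with (d−c, ||d||−||c||) = λ·(b−a, ||b||−||a||)} satisfies |Λ| ≤ 2·|Δ(E)|. -/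
open Finset

namespace FpDist

/-- Let `p` be a prime, `E ⊆ 𝔽_p²`, and `a, b ∈ 𝔽_p²` with `‖a - b‖ ≠ 0`. Then the set
`Λ = {λ ≠ 0 : ∃ c, d ∈ E, (d - c, ‖d‖ - ‖c‖) = λ·(b - a, ‖b‖ - ‖a‖)}` has size at
most `2·|Δ(E)|`. -/
theorem lambda_set_card_le (p : ℕ) [Fact p.Prime] (E : Finset (Pt p)) (a b : Pt p)
    (hab : dist2 a b ≠ 0) :
    Set.ncard {l : ZMod p | l ≠ 0 ∧ ∃ c ∈ E, ∃ d ∈ E,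
        d - c = l • (b - a) ∧ norm2 d - norm2 c = l * (norm2 b - norm2 a)} ≤
      2 * (distSet E).card := by
  classical
  have hfin : ({l : ZMod p | l ≠ 0 ∧ ∃ c ∈ E, ∃ d ∈ E,
      d - c = l • (b - a) ∧ norm2 d - norm2 c = l * (norm2 b - norm2 a)}).Finite :=
    Set.toFinite _
  rw [Set.ncard_eq_toFinset_card _ hfin]
  set S : Finset (ZMod p) := hfin.toFinset with hS
  have hmemS : ∀ l : ZMod p, l ∈ S ↔ l ≠ 0 ∧ ∃ c ∈ E, ∃ d ∈ E,
      d - c = l • (b - a) ∧ norm2 d - norm2 c = l * (norm2 b - norm2 a) := by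
    intro l
    rw [hS, Set.Finite.mem_toFinset]
    rfl
  set f : ZMod p → ZMod p := fun l => l ^ 2 * dist2 a b with hf
  have himg : S.image f ⊆ distSet E := by
    intro y hy
    obtain ⟨l, hl, rfl⟩ := Finset.mem_image.mp hy
    obtain ⟨hl0, c, hc, d, hd, hdc, -⟩ := (hmemS l).mp hl
    have h1 : d.1 - c.1 = l * (b.1 - a.1) := by
      have := congrArg Prod.fst hdc
      simpa [Prod.sub_def] using this
    have h2 : d.2 - c.2 = l * (b.2 - a.2) := by
      have := congrArg Prod.snd hdc
      simpa [Prod.sub_def] using this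
    have hval : dist2 d c = l ^ 2 * dist2 a b := by
      simp only [dist2, h1, h2]
      ring
    refine Finset.mem_image.mpr ⟨(d, c), ?_, hval⟩
    exact Finset.mem_product.mpr ⟨hd, hc⟩
  have hfib : ∀ y ∈ S.image f, (S.filter fun l => f l = y).card ≤ 2 := by
    intro y _
    rcases (S.filter fun l => f l = y).eq_empty_or_nonempty with he | ⟨l₀, hl₀⟩
    · simp [he]
    · have hl₀' := Finset.mem_filter.mp hl₀
      have hsub : (S.filter fun l => f l = y) ⊆ {l₀, -l₀} := by
        intro l hl
        have hl' := Finset.mem_filter.mp hl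
        have hsq : l ^ 2 = l₀ ^ 2 := by
          have : l ^ 2 * dist2 a b = l₀ ^ 2 * dist2 a b := by
            have := hl'.2.trans hl₀'.2.symm
            simpa [hf] using this
          exact mul_right_cancel₀ hab this
        have : (l - l₀) * (l + l₀) = 0 := by linear_combination hsq
        rcases mul_eq_zero.mp this with h | h
        · simp [sub_eq_zero.mp h]
        · have : l = -l₀ := eq_neg_of_add_eq_zero_left h
          simp [this]
      calc (S.filter fun l => f l = y).card ≤ ({l₀, -l₀} : Finset (ZMod p)).card :=
            Finset.card_le_card hsub
        _ ≤ 2 := Finset.card_insert_le _ _ |>.trans (by simp)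
  calc S.card ≤ 2 * (S.image f).card := Finset.card_le_mul_card_image_of_maps_to
        (fun a ha => Finset.mem_image_of_mem f ha) 2 hfib
    _ ≤ 2 * (distSet E).card := by
        exact Nat.mul_le_mul_left 2 (Finset.card_le_card himg)

end FpDist
end
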